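/- Let M ≥ 1 and let p_1, …, p_{M+1} ∈ [0,1]. For each m define p̄_m = (1/m)·∑_{k=1}^m p_k, h̄_m = (1/m)·∑_{k=1}^m h(p_k), and I(m) = h(p̄_m) − h̄_m. Then I(M+1) ≥ (M/(M+1))·I(M). -/
import Mathlib


open Finset

/-- Binary entropy function `h(p) = -p·log₂ p - (1-p)·log₂(1-p)` (with `0·log₂ 0 = 0`). -/
noncomputable def binEnt (p : ℝ) : ℝ :=
  -p * Real.logb 2 p - (1 - p) * Real.logb 2 (1 - p)

lemma binEnt_eq (p : ℝ) : binEnt p = (Real.log 2)⁻¹ • Real.binEntropy p := by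
  simp [binEnt, Real.binEntropy, Real.logb, Real.log_inv, div_eq_inv_mul]
  ring

lemma concave_binEnt : ConcaveOn ℝ (Set.Icc 0 1) binEnt := by
  have h := Real.strictConcave_binEntropy.concaveOn.smul
    (c := (Real.log 2)⁻¹) (by positivity)
  have : binEnt = fun p => (Real.log 2)⁻¹ • Real.binEntropy p := funext binEnt_eq
  rw [this]
  exact h

/-- Concavity lower bound used in Proposition 3: `I(M+1) ≥ (M/(M+1))·I(M)`. -/
theorem stmt1 (M : ℕ) (hM : 1 ≤ M) (p : ℕ → ℝ)
    (hp : ∀ k, 1 ≤ k → k ≤ M + 1 → p k ∈ Set.Icc (0 : ℝ) 1)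
    (pbar hbar I : ℕ → ℝ)
    (hpbar : ∀ m, pbar m = (1 / (m : ℝ)) * ∑ k ∈ Finset.Icc 1 m, p k)
    (hhbar : ∀ m, hbar m = (1 / (m : ℝ)) * ∑ k ∈ Finset.Icc 1 m, binEnt (p k))
    (hI : ∀ m, I m = binEnt (pbar m) - hbar m) :
    ((M : ℝ) / ((M : ℝ) + 1)) * I M ≤ I (M + 1) := by
  have hMpos : (0 : ℝ) < M := by exact_mod_cast hM
  have hM1pos : (0 : ℝ) < (M : ℝ) + 1 := by linarith
  set a : ℝ := (M : ℝ) / ((M : ℝ) + 1) with ha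
  set b : ℝ := 1 / ((M : ℝ) + 1) with hb
  have hab : a + b = 1 := by rw [ha, hb]; field_simp
  have ha0 : 0 ≤ a := by positivity
  have hb0 : 0 ≤ b := by positivity
  -- split sums
  have hsum : ∀ f : ℕ → ℝ, ∑ k ∈ Finset.Icc 1 (M + 1), f k
      = f (M + 1) + ∑ k ∈ Finset.Icc 1 M, f k := by
    intro f
    rw [Finset.sum_Icc_succ_top (by omega), add_comm]
  have hcast : ((M + 1 : ℕ) : ℝ) = (M : ℝ) + 1 := by push_cast; ring
  have hpbar1 : pbar (M + 1) = a * pbar M + b * p (M + 1) := by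
    rw [hpbar, hpbar, hsum, hcast, ha, hb]
    field_simp
    ring
  have hhbar1 : hbar (M + 1) = a * hbar M + b * binEnt (p (M + 1)) := by
    rw [hhbar, hhbar, hsum, hcast, ha, hb]
    field_simp
    ring
  -- pbar M ∈ Icc 0 1
  have hpm : pbar M ∈ Set.Icc (0 : ℝ) 1 := by
    rw [hpbar]
    constructor
    · apply mul_nonneg (by positivity)
      exact Finset.sum_nonneg fun k hk => by
        obtain ⟨h1, h2⟩ := Finset.mem_Icc.mp hk
        exact (hp k h1 (by omega)).1
    · rw [one_div, inv_mul_le_iff₀ hMpos, mul_one]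
      calc ∑ k ∈ Finset.Icc 1 M, p k ≤ ∑ k ∈ Finset.Icc 1 M, 1 := by
            apply Finset.sum_le_sum
            intro k hk
            obtain ⟨h1, h2⟩ := Finset.mem_Icc.mp hk
            exact (hp k h1 (by omega)).2
        _ = (M : ℝ) := by simp
  have hpM1 : p (M + 1) ∈ Set.Icc (0 : ℝ) 1 := hp (M + 1) (by omega) le_rfl
  have hconc := concave_binEnt.2 hpm hpM1 ha0 hb0 hab
  simp only [smul_eq_mul] at hconc
  rw [hI, hI, hpbar1, hhbar1]
  linarith
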